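/- arXiv:1405.2752 — 4 statements merged into one kernel-verified Lean document; each statement's English description precedes it below -/
import Mathlib

section
/- Let A be an abelian group and let div(A) denote the subgroup of elements x ∈ A such that for every positive integer n there exists y ∈ A with n·y = x. If the quotient A/div(A) is finitely generated, then div(A) is a divisible group (i.e., div(A) equals the maximal divisible subgroup of A). -/
/-- The subgroup of divisible elements of an abelian group: elements `x` such that
for every positive integer `n` there is `y` with `n • y = x`. -/
def divSubgroup (A : Type*) [AddCommGroup A] : AddSubgroup A where
  carrier := {x | ∀ n : ℕ, 0 < n → ∃ y : A, n • y = x}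
  zero_mem' := fun n _ => ⟨0, smul_zero n⟩
  add_mem' := by
    intro a b ha hb n hn
    obtain ⟨y, hy⟩ := ha n hn
    obtain ⟨z, hz⟩ := hb n hn
    exact ⟨y + z, by rw [smul_add, hy, hz]⟩
  neg_mem' := by
    intro a ha n hn
    obtain ⟨y, hy⟩ := ha n hn
    exact ⟨-y, by rw [smul_neg, hy]⟩


theorem div_aux {A : Type*} [AddCommGroup A] (D : AddSubgroup A)
    (hFG : AddGroup.FG (A ⧸ D)) :
    ∀ x ∈ D, (∀ n : ℕ, 0 < n → ∃ y : A, n • y = x) → ∀ n : ℕ, 0 < n →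
      ∃ y : A, (QuotientAddGroup.mk y : A ⧸ D) = 0 ∧ n • y = x := by
  intro x hxD hx n hn
  haveI : Module.Finite ℤ (A ⧸ D) := Module.Finite.iff_addGroup_fg.mpr hFG
  set T := AddCommGroup.torsion (A ⧸ D) with hT
  haveI : Module.Finite ℤ (T.toIntSubmodule) := inferInstance
  haveI : AddGroup.FG T := Module.Finite.iff_addGroup_fg.mp ‹Module.Finite ℤ T.toIntSubmodule›
  haveI : Finite T := AddCommGroup.finite_of_fg_torsion T (by
    rintro ⟨g, hg⟩
    obtain ⟨m, hm, hmg⟩ := isOfFinAddOrder_iff_nsmul_eq_zero.mp hg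
    exact isOfFinAddOrder_iff_nsmul_eq_zero.mpr ⟨m, hm, Subtype.ext (by simpa using hmg)⟩)
  set t := Nat.card T with ht
  have htpos : 0 < t := Nat.card_pos
  obtain ⟨y, hy⟩ := hx (n * t) (Nat.mul_pos hn htpos)
  have hybar : ((n * t) : ℕ) • (QuotientAddGroup.mk y : A ⧸ D) = 0 := by
    rw [← QuotientAddGroup.mk_nsmul, hy, QuotientAddGroup.eq_zero_iff]
    exact hxD
  have hyT : (QuotientAddGroup.mk y : A ⧸ D) ∈ T := by
    exact isOfFinAddOrder_iff_nsmul_eq_zero.mpr ⟨n * t, Nat.mul_pos hn htpos, hybar⟩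
  refine ⟨t • y, ?_, ?_⟩
  · have := card_nsmul_eq_zero' (x := (⟨_, hyT⟩ : T))
    rw [QuotientAddGroup.mk_nsmul]
    exact congrArg Subtype.val this
  · rw [← mul_nsmul', hy]

/-- If `A/div(A)` is finitely generated, then `div(A)` is a divisible group. -/
theorem stmt0 {A : Type*} [AddCommGroup A]
    (hFG : AddGroup.FG (A ⧸ divSubgroup A)) :
    ∀ x ∈ divSubgroup A, ∀ n : ℕ, 0 < n → ∃ y ∈ divSubgroup A, n • y = x := by
  intro x hx n hn
  obtain ⟨y, hy0, hyn⟩ := div_aux (divSubgroup A) hFG x hx hx n hn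
  refine ⟨y, ?_, hyn⟩
  intro m hm
  have hyD : y ∈ divSubgroup A := (QuotientAddGroup.eq_zero_iff y).mp hy0
  exact hyD m hm
end

section
/- Let f : A → B be a homomorphism of abelian groups such that for every positive integer m the induced map A/mA → B/mB is surjective and B is finitely generated. Then f is surjective. -/
/-!
The cokernel `B ⧸ f.range` is finitely generated, and the mod-`m` surjectivity says it is
`m`-divisible for every `m ≥ 1`. A finitely generated divisible abelian group is trivial.
-/

theorem AddGroup.subsingleton_of_fg_of_nsmul_surjective {M : Type*} [AddCommGroup M]
    [AddGroup.FG M] (hdiv : ∀ n : ℕ, n ≠ 0 → Function.Surjective fun x : M => n • x) :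
    Subsingleton M := by
  have : Module.Finite ℤ M := Module.Finite.iff_addGroup_fg.mpr ‹_›
  -- Nakayama for the ideal `(2)`: `M = 2M` forces `M` to be killed by an odd, hence nonzero,
  -- integer `r`; then `M = |r| M = 0`.
  have htop_le_two_smul : (⊤ : Submodule ℤ M) ≤ Ideal.span {(2 : ℤ)} • ⊤ := by
    intro x _
    obtain ⟨y, rfl⟩ := hdiv 2 two_ne_zero x
    show (2 : ℕ) • y ∈ _
    rw [← natCast_zsmul]
    exact Submodule.smul_mem_smul (Ideal.mem_span_singleton_self 2) trivial
  obtain ⟨r, hr1, hr⟩ := Submodule.exists_sub_one_mem_and_smul_eq_zero_of_fg_of_le_smul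
    _ ⊤ Module.Finite.fg_top htop_le_two_smul
  have hr0 : r.natAbs ≠ 0 := by
    obtain ⟨k, hk⟩ := Ideal.mem_span_singleton'.mp hr1
    omega
  refine ⟨fun x y => ?_⟩
  obtain ⟨x, rfl⟩ := hdiv _ hr0 x
  obtain ⟨y, rfl⟩ := hdiv _ hr0 y
  show r.natAbs • x = r.natAbs • y
  rw [natAbs_nsmul_eq_zero.mpr (hr x trivial), natAbs_nsmul_eq_zero.mpr (hr y trivial)]

/-- If `f : A → B` is a homomorphism of abelian groups such that for every positive
integer `m` the induced map `A/mA → B/mB` is surjective (i.e. every `b : B` is of the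
form `f a + m • c`) and `B` is finitely generated, then `f` is surjective. -/
theorem stmt4 {A B : Type*} [AddCommGroup A] [AddCommGroup B]
    (hB : AddGroup.FG B) (f : A →+ B)
    (hsurj : ∀ m : ℕ, 0 < m → ∀ b : B, ∃ a : A, ∃ c : B, b = f a + m • c) :
    Function.Surjective f := by
  have := hB
  have hcoker : Subsingleton (B ⧸ f.range) := by
    refine AddGroup.subsingleton_of_fg_of_nsmul_surjective fun m hm q => ?_
    obtain ⟨b, rfl⟩ := QuotientAddGroup.mk_surjective q
    obtain ⟨a, c, rfl⟩ := hsurj m (Nat.pos_of_ne_zero hm) b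
    exact ⟨c, by simp⟩
  rwa [QuotientAddGroup.subsingleton_iff, AddMonoidHom.range_eq_top] at hcoker
end

section
/- Let A be an abelian group such that B := A/div(A) is finitely generated, where div(A) is the subgroup of divisible elements. Choose n ≥ 1 such that nB is free, and let C ⊆ A be the preimage of nB under the projection A → B. Then C is the internal direct sum of a subgroup mapping isomorphically to nB and div(A); in particular div(C) = div(A). -/
/-- The subgroup `nM` of `n`-th multiples of an abelian group `M`. -/
def nMul (M : Type*) [AddCommGroup M] (n : ℕ) : AddSubgroup M :=
  ((n : ℤ) • AddMonoidHom.id M).range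

/-!
Since `nB` is free, hence projective, the inclusion `nB → B` lifts along the projection
`π : A → B` to a homomorphism `σ : nB → A`. Its image `S` meets `ker π = div(A)` trivially,
and every `x ∈ C = π⁻¹(nB)` splits as `σ (π x) + (x - σ (π x))` with the second summand in
`ker π`. Finally, an element `x = (m n) • y` of `div(A)` is divisible by `m` inside `C`,
since `n • y ∈ C`.
-/

namespace AddMonoidHom

variable {A B : Type*} [AddGroup A] [AddGroup B] {π : A →+ B} {F : AddSubgroup B}
  {σ : F →+ A}

theorem range_le_comap_of_section (hσ : ∀ b, π (σ b) = b) : σ.range ≤ F.comap π := by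
  rintro _ ⟨b, rfl⟩
  simp [AddSubgroup.mem_comap, hσ b]

theorem range_inf_ker_of_section (hσ : ∀ b, π (σ b) = b) : σ.range ⊓ π.ker = ⊥ := by
  rw [eq_bot_iff]
  rintro _ ⟨⟨b, rfl⟩, hker⟩
  have hb : b = 0 := Subtype.ext (by rw [← hσ b]; exact hker)
  simp [hb]

theorem range_sup_ker_of_section (hσ : ∀ b, π (σ b) = b) :
    σ.range ⊔ π.ker = F.comap π := by
  refine le_antisymm (sup_le (range_le_comap_of_section hσ) fun x hx => ?_) fun x hx => ?_
  · simp [AddSubgroup.mem_comap, (mem_ker).1 hx]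
  · have hker : -σ ⟨π x, hx⟩ + x ∈ π.ker := by simp [hσ]
    have hrange : σ ⟨π x, hx⟩ ∈ σ.range := ⟨⟨π x, hx⟩, rfl⟩
    simpa using AddSubgroup.add_mem_sup hrange hker

theorem map_range_of_section (hσ : ∀ b, π (σ b) = b) : σ.range.map π = F := by
  refine le_antisymm ?_ fun b hb => ⟨σ ⟨b, hb⟩, ⟨⟨b, hb⟩, rfl⟩, hσ _⟩
  rintro _ ⟨_, ⟨b, rfl⟩, rfl⟩
  simp [hσ b]

end AddMonoidHom

theorem AddSubgroup.injective_restrict_of_inf_ker_eq_bot {A B : Type*} [AddGroup A] [AddGroup B]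
    {π : A →+ B} {S : AddSubgroup A} (h : S ⊓ π.ker = ⊥) :
    Function.Injective (fun s : S => π s) := by
  refine (injective_iff_map_eq_zero (π.comp S.subtype)).2 fun s hs => Subtype.ext ?_
  have : (s : A) ∈ S ⊓ π.ker := ⟨s.2, hs⟩
  simpa [h] using this

theorem AddMonoidHom.exists_section_of_surjective {A B : Type*} [AddCommGroup A] [AddCommGroup B]
    {π : A →+ B} (hπ : Function.Surjective π) (F : AddSubgroup B) [Module.Projective ℤ F] :
    ∃ σ : F →+ A, ∀ b, π (σ b) = b := by
  obtain ⟨σ, hσ⟩ :=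
    Module.projective_lifting_property π.toIntLinearMap F.subtype.toIntLinearMap hπ
  exact ⟨σ.toAddMonoidHom, fun b => LinearMap.congr_fun hσ b⟩

theorem nsmul_mem_nMul (M : Type*) [AddCommGroup M] (n : ℕ) (b : M) : n • b ∈ nMul M n :=
  ⟨b, by simp [natCast_zsmul]⟩

theorem forall_exists_mem_nsmul_eq_iff_mem_divSubgroup {A : Type*} [AddCommGroup A]
    {H : AddSubgroup A} {n : ℕ} (hn : 0 < n) (hH : ∀ y : A, n • y ∈ H) (x : A) :
    (∀ m : ℕ, 0 < m → ∃ y ∈ H, m • y = x) ↔ x ∈ divSubgroup A := by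
  refine ⟨fun h m hm => ?_, fun hx m hm => ?_⟩
  · obtain ⟨y, -, hy⟩ := h m hm
    exact ⟨y, hy⟩
  · obtain ⟨y, hy⟩ := hx (m * n) (Nat.mul_pos hm hn)
    exact ⟨n • y, hH y, by rwa [← mul_smul]⟩

theorem stmt6_general {A : Type*} [AddCommGroup A]
    (n : ℕ) (hn : 0 < n)
    (hfree : Module.Free ℤ (nMul (A ⧸ divSubgroup A) n)) :
    ∃ S : AddSubgroup A,
      S ≤ (nMul (A ⧸ divSubgroup A) n).comap (QuotientAddGroup.mk' (divSubgroup A)) ∧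
      S ⊓ divSubgroup A = ⊥ ∧
      S ⊔ divSubgroup A =
        (nMul (A ⧸ divSubgroup A) n).comap (QuotientAddGroup.mk' (divSubgroup A)) ∧
      AddSubgroup.map (QuotientAddGroup.mk' (divSubgroup A)) S =
        nMul (A ⧸ divSubgroup A) n ∧
      Function.Injective (fun s : S => QuotientAddGroup.mk' (divSubgroup A) s.1) ∧
      (∀ x ∈ (nMul (A ⧸ divSubgroup A) n).comap (QuotientAddGroup.mk' (divSubgroup A)),
        ((∀ m : ℕ, 0 < m → ∃ y ∈ (nMul (A ⧸ divSubgroup A) n).comap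
            (QuotientAddGroup.mk' (divSubgroup A)), m • y = x) ↔ x ∈ divSubgroup A)) := by
  set π := QuotientAddGroup.mk' (divSubgroup A)
  have hker : π.ker = divSubgroup A := QuotientAddGroup.ker_mk' _
  obtain ⟨σ, hσ⟩ := π.exists_section_of_surjective (QuotientAddGroup.mk'_surjective _)
    (nMul (A ⧸ divSubgroup A) n)
  have hinf := AddMonoidHom.range_inf_ker_of_section hσ
  have hsup := AddMonoidHom.range_sup_ker_of_section hσ
  refine ⟨σ.range, AddMonoidHom.range_le_comap_of_section hσ, by simpa only [hker] using hinf,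
    by simpa only [hker] using hsup, AddMonoidHom.map_range_of_section hσ,
    AddSubgroup.injective_restrict_of_inf_ker_eq_bot hinf, fun x _ => ?_⟩
  exact forall_exists_mem_nsmul_eq_iff_mem_divSubgroup hn
    (fun y => by simpa using nsmul_mem_nMul _ n (π y)) x

/-- Let `A` be an abelian group with `B = A/div(A)` finitely generated, let `n ≥ 1`
be such that `nB` is free, and let `C ⊆ A` be the preimage of `nB` in `A`. Then `C`
is the internal direct sum of a subgroup mapping isomorphically onto `nB` and
`div(A)`; in particular the divisible elements of `C` are exactly `div(A)`. -/
theorem stmt6 {A : Type*} [AddCommGroup A]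
    (hFG : AddGroup.FG (A ⧸ divSubgroup A)) (n : ℕ) (hn : 0 < n)
    (hfree : Module.Free ℤ (nMul (A ⧸ divSubgroup A) n)) :
    ∃ S : AddSubgroup A,
      S ≤ (nMul (A ⧸ divSubgroup A) n).comap (QuotientAddGroup.mk' (divSubgroup A)) ∧
      S ⊓ divSubgroup A = ⊥ ∧
      S ⊔ divSubgroup A =
        (nMul (A ⧸ divSubgroup A) n).comap (QuotientAddGroup.mk' (divSubgroup A)) ∧
      AddSubgroup.map (QuotientAddGroup.mk' (divSubgroup A)) S =
        nMul (A ⧸ divSubgroup A) n ∧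
      Function.Injective (fun s : S => QuotientAddGroup.mk' (divSubgroup A) s.1) ∧
      (∀ x ∈ (nMul (A ⧸ divSubgroup A) n).comap (QuotientAddGroup.mk' (divSubgroup A)),
        ((∀ m : ℕ, 0 < m → ∃ y ∈ (nMul (A ⧸ divSubgroup A) n).comap
            (QuotientAddGroup.mk' (divSubgroup A)), m • y = x) ↔ x ∈ divSubgroup A)) :=
  stmt6_general n hn hfree
end

section
/- Let 0 → C'' → C' → C → K → 0 be an exact sequence of chain complexes of abelian groups (i.e., exact in each degree), and suppose H_i(K) = 0 for all i ≤ n+1. Then there is an exact sequence of homology groups H_n(C'') → H_n(C') → H_n(C) → H_{n−1}(C'') → H_{n−1}(C') → H_{n−1}(C) → ⋯ → H_0(C'') → H_0(C') → H_0(C) → 0 in degrees ≤ n. -/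
/-!
Since `C → K` is onto with kernel `g(C')` and `H_m(K) = 0` for `m ≤ n + 1`, every `x ∈ C_m`
(`m ≤ n + 1`) whose boundary lies in `g(C')` has the form `g u + d w`. This weak surjectivity of
`g` is all that the usual diagram chase for the long exact homology sequence of
`0 → C'' → C' → C → 0` uses of the surjectivity of `g`, so the chase goes through in degrees `≤ n`.
-/

section

variable (C : ℕ → Type*) [∀ i, AddCommGroup (C i)] (d : ∀ i : ℕ, C (i + 1) →+ C i)

/-- Cycles of an `ℕ`-indexed chain complex (in degree `n + 1`). -/
def cycN (n : ℕ) : AddSubgroup (C (n + 1)) := (d n).ker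

/-- Boundaries of an `ℕ`-indexed chain complex (in degree `n + 1`). -/
def bdryN (n : ℕ) : AddSubgroup (C (n + 1)) := (d (n + 1)).range

/-- Homology of a chain complex of abelian groups concentrated in non-negative
degrees. -/
def HgbN : ℕ → Type _
  | 0 => C 0 ⧸ (d 0).range
  | n + 1 => cycN C d n ⧸ (bdryN C d n).addSubgroupOf (cycN C d n)

noncomputable instance (n : ℕ) : AddCommGroup (HgbN C d n) := by
  cases n with
  | zero => exact QuotientAddGroup.Quotient.addCommGroup _
  | succ n => exact QuotientAddGroup.Quotient.addCommGroup _

end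

/-- The map induced on homology by a chain map. -/
noncomputable def indH {C C' : ℕ → Type*} [∀ i, AddCommGroup (C i)]
    [∀ i, AddCommGroup (C' i)] (d : ∀ i : ℕ, C (i + 1) →+ C i)
    (d' : ∀ i : ℕ, C' (i + 1) →+ C' i) (f : ∀ i, C i →+ C' i)
    (hf : ∀ (i : ℕ) (x : C (i + 1)), f i (d i x) = d' i (f (i + 1) x)) :
    ∀ n : ℕ, HgbN C d n →+ HgbN C' d' n
  | 0 => QuotientAddGroup.map _ _ (f 0) (by
      rintro x ⟨y, rfl⟩
      exact ⟨f 1 y, (hf 0 y).symm⟩)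
  | n + 1 => QuotientAddGroup.map _ _
      (((f (n + 1)).comp (cycN C d n).subtype).codRestrict (cycN C' d' n) (by
        intro x
        have hx : d n x.1 = 0 := x.2
        show d' n (f (n + 1) x.1) = 0
        rw [← hf n x.1, hx, map_zero]))
      (by
        intro x hx
        rw [AddSubgroup.mem_comap]
        rw [AddSubgroup.mem_addSubgroupOf] at hx ⊢
        obtain ⟨y, hy⟩ := hx
        exact ⟨f (n + 1 + 1) y, by
          show d' (n + 1) (f (n + 1 + 1) y) = f (n + 1) x.1
          rw [← hf (n + 1) y, hy]⟩)

section Homology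

variable {C : ℕ → Type*} [∀ i, AddCommGroup (C i)] (d : ∀ i : ℕ, C (i + 1) →+ C i)

def IsCycN : ∀ {n : ℕ}, C n → Prop
  | 0, _ => True
  | m + 1, x => d m x = 0

variable {d}

theorem isCycN_zero : ∀ {n : ℕ}, IsCycN d (0 : C n)
  | 0 => trivial
  | _ + 1 => map_zero _

theorem isCycN_deg_zero (x : C 0) : IsCycN d x :=
  trivial

theorem IsCycN.add : ∀ {n : ℕ} {x y : C n}, IsCycN d x → IsCycN d y → IsCycN d (x + y)
  | 0, _, _, _, _ => trivial
  | m + 1, x, y, hx, hy => by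
      change d m (x + y) = 0
      rw [map_add, show d m x = 0 from hx, show d m y = 0 from hy, add_zero]

theorem IsCycN.sub : ∀ {n : ℕ} {x y : C n}, IsCycN d x → IsCycN d y → IsCycN d (x - y)
  | 0, _, _, _, _ => trivial
  | m + 1, x, y, hx, hy => by
      change d m (x - y) = 0
      rw [map_sub, show d m x = 0 from hx, show d m y = 0 from hy, sub_zero]

theorem isCycN_d (hd : ∀ (i : ℕ) (x : C (i + 1 + 1)), d i (d (i + 1) x) = 0) :
    ∀ {n : ℕ} (x : C (n + 1)), IsCycN d (d n x)
  | 0, _ => trivial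
  | m + 1, x => hd m x

variable (d) in
def HgbN.mk : ∀ {n : ℕ} (x : C n), IsCycN d x → HgbN C d n
  | 0, x, _ => QuotientAddGroup.mk x
  | m + 1, x, hx => QuotientAddGroup.mk (⟨x, hx⟩ : cycN C d m)

namespace HgbN

theorem mk_surjective : ∀ {n : ℕ} (c : HgbN C d n), ∃ x hx, mk d x hx = c
  | 0, c => by
      obtain ⟨x, rfl⟩ := QuotientAddGroup.mk_surjective c
      exact ⟨x, trivial, rfl⟩
  | m + 1, c => by
      obtain ⟨x, rfl⟩ := QuotientAddGroup.mk_surjective c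
      exact ⟨x.1, x.2, rfl⟩

theorem mk_zero : ∀ {n : ℕ}, mk d (0 : C n) isCycN_zero = 0
  | 0 => rfl
  | _ + 1 => rfl

theorem mk_add : ∀ {n : ℕ} {x y : C n} (hx : IsCycN d x) (hy : IsCycN d y),
    mk d (x + y) (hx.add hy) = mk d x hx + mk d y hy
  | 0, _, _, _, _ => rfl
  | _ + 1, _, _, _, _ => rfl

theorem mk_sub : ∀ {n : ℕ} {x y : C n} (hx : IsCycN d x) (hy : IsCycN d y),
    mk d (x - y) (hx.sub hy) = mk d x hx - mk d y hy
  | 0, _, _, _, _ => rfl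
  | _ + 1, _, _, _, _ => rfl

theorem mk_eq_zero_iff : ∀ {n : ℕ} {x : C n} (hx : IsCycN d x),
    mk d x hx = 0 ↔ ∃ y, d n y = x
  | 0, _, _ => QuotientAddGroup.eq_zero_iff _
  | _ + 1, _, _ => (QuotientAddGroup.eq_zero_iff _).trans AddSubgroup.mem_addSubgroupOf

theorem mk_eq_mk_iff {n : ℕ} {x y : C n} (hx : IsCycN d x) (hy : IsCycN d y) :
    mk d x hx = mk d y hy ↔ ∃ u, d n u = x - y := by
  rw [← sub_eq_zero, ← mk_sub, mk_eq_zero_iff]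

theorem exists_eq_d_of_subsingleton {n : ℕ} [Subsingleton (HgbN C d n)] {x : C n}
    (hx : IsCycN d x) : ∃ y, d n y = x :=
  (mk_eq_zero_iff hx).mp (Subsingleton.elim _ _)

end HgbN

end Homology

section ChainMap

variable {C C' : ℕ → Type*} [∀ i, AddCommGroup (C i)] [∀ i, AddCommGroup (C' i)]
  {d : ∀ i : ℕ, C (i + 1) →+ C i} {d' : ∀ i : ℕ, C' (i + 1) →+ C' i} {f : ∀ i, C i →+ C' i}
  (hf : ∀ (i : ℕ) (x : C (i + 1)), f i (d i x) = d' i (f (i + 1) x))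
include hf

theorem IsCycN.map : ∀ {n : ℕ} {x : C n}, IsCycN d x → IsCycN d' (f n x)
  | 0, _, _ => trivial
  | m + 1, x, hx => by
      change d' m (f (m + 1) x) = 0
      rw [← hf m x, show d m x = 0 from hx, map_zero]

theorem IsCycN.of_map (hfinj : ∀ i, Function.Injective (f i)) :
    ∀ {n : ℕ} {x : C n}, IsCycN d' (f n x) → IsCycN d x
  | 0, _, _ => trivial
  | m + 1, x, hx => hfinj m <| by
      rw [map_zero, hf m x]
      exact hx

theorem indH_mk : ∀ {n : ℕ} {x : C n} (hx : IsCycN d x),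
    indH d d' f hf n (HgbN.mk d x hx) = HgbN.mk d' (f n x) (hx.map hf)
  | 0, _, _ => rfl
  | _ + 1, _, _ => rfl

end ChainMap

section LongExactSequence

variable {C'' C' C : ℕ → Type*} [∀ i, AddCommGroup (C'' i)] [∀ i, AddCommGroup (C' i)]
  [∀ i, AddCommGroup (C i)]
  {d'' : ∀ i : ℕ, C'' (i + 1) →+ C'' i} {d' : ∀ i : ℕ, C' (i + 1) →+ C' i}
  {dC : ∀ i : ℕ, C (i + 1) →+ C i} {f : ∀ i, C'' i →+ C' i} {g : ∀ i, C' i →+ C i}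

variable (dC g) in
def LiftsModBoundaries (m : ℕ) : Prop :=
  ∀ x : C (m + 1), dC m x ∈ (g m).range → ∃ u w, g (m + 1) u = x - dC (m + 1) w

variable (d' dC f g) in
/-- The relation `δ [x] = [v]` of the connecting homomorphism. -/
def IsConnecting (i : ℕ) (x : C (i + 1)) (v : C'' i) : Prop :=
  ∃ u w, g (i + 1) u = x - dC (i + 1) w ∧ f i v = d' i u

theorem exists_isConnecting (hg : ∀ (i : ℕ) (x : C' (i + 1)), g i (d' i x) = dC i (g (i + 1) x))
    (hfg : ∀ i, (f i).range = (g i).ker)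
    (hdC : ∀ (i : ℕ) (x : C (i + 1 + 1)), dC i (dC (i + 1) x) = 0)
    {i : ℕ} (hlift : LiftsModBoundaries dC g i) {x : C (i + 1)} (hx : IsCycN dC x) :
    ∃ v, IsConnecting d' dC f g i x v := by
  obtain ⟨u, w, hu⟩ := hlift x ⟨0, by rw [map_zero]; exact hx.symm⟩
  obtain ⟨v, hv⟩ : d' i u ∈ (f i).range := by
    rw [hfg, AddMonoidHom.mem_ker, hg, hu, map_sub, hdC, sub_zero]
    exact hx
  exact ⟨v, u, w, hu, hv⟩

namespace IsConnecting

variable {i : ℕ} {x y : C (i + 1)} {v v' : C'' i}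

theorem add (hx : IsConnecting d' dC f g i x v) (hy : IsConnecting d' dC f g i y v') :
    IsConnecting d' dC f g i (x + y) (v + v') := by
  obtain ⟨u, w, hu, hv⟩ := hx
  obtain ⟨u', w', hu', hv'⟩ := hy
  refine ⟨u + u', w + w', ?_, ?_⟩
  · rw [map_add, hu, hu', map_add]
    abel
  · rw [map_add, hv, hv', map_add]

theorem sub (hx : IsConnecting d' dC f g i x v) (hy : IsConnecting d' dC f g i y v') :
    IsConnecting d' dC f g i (x - y) (v - v') := by
  obtain ⟨u, w, hu, hv⟩ := hx
  obtain ⟨u', w', hu', hv'⟩ := hy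
  refine ⟨u - u', w - w', ?_, ?_⟩
  · rw [map_sub, hu, hu', map_sub]
    abel
  · rw [map_sub, hv, hv', map_sub]

theorem isCycN (hf : ∀ (i : ℕ) (x : C'' (i + 1)), f i (d'' i x) = d' i (f (i + 1) x))
    (hfinj : ∀ i, Function.Injective (f i))
    (hd' : ∀ (i : ℕ) (x : C' (i + 1 + 1)), d' i (d' (i + 1) x) = 0)
    (hx : IsConnecting d' dC f g i x v) : IsCycN d'' v := by
  obtain ⟨u, -, -, hv⟩ := hx
  refine IsCycN.of_map hf hfinj ?_
  rw [hv]
  exact isCycN_d hd' u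

end IsConnecting

variable (hf : ∀ (i : ℕ) (x : C'' (i + 1)), f i (d'' i x) = d' i (f (i + 1) x))
  (hg : ∀ (i : ℕ) (x : C' (i + 1)), g i (d' i x) = dC i (g (i + 1) x))
  (hfinj : ∀ i, Function.Injective (f i)) (hfg : ∀ i, (f i).range = (g i).ker)
  (hd' : ∀ (i : ℕ) (x : C' (i + 1 + 1)), d' i (d' (i + 1) x) = 0)
  (hdC : ∀ (i : ℕ) (x : C (i + 1 + 1)), dC i (dC (i + 1) x) = 0)
include hf hg hfinj hfg hd' hdC

namespace IsConnecting

variable {i : ℕ} {x : C (i + 1)} {v v' : C'' i}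

theorem exists_d_eq (hlift : LiftsModBoundaries dC g (i + 1))
    (hx : IsConnecting d' dC f g i x v) (hxd : ∃ w, dC (i + 1) w = x) : ∃ q, d'' i q = v := by
  obtain ⟨u, w, hu, hv⟩ := hx
  obtain ⟨w₀, rfl⟩ := hxd
  obtain ⟨p, s, hp⟩ := hlift (w₀ - w) ⟨u, by rw [hu, map_sub]⟩
  obtain ⟨q, hq⟩ : u - d' (i + 1) p ∈ (f (i + 1)).range := by
    rw [hfg, AddMonoidHom.mem_ker, map_sub, hg, hp, hu, map_sub, map_sub, hdC, sub_zero, sub_self]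
  refine ⟨q, hfinj i ?_⟩
  rw [hf, hq, map_sub, hd', sub_zero, hv]

theorem mk_eq (hlift : LiftsModBoundaries dC g (i + 1))
    (hv : IsConnecting d' dC f g i x v) (hv' : IsConnecting d' dC f g i x v')
    (hvc : IsCycN d'' v) (hvc' : IsCycN d'' v') : HgbN.mk d'' v hvc = HgbN.mk d'' v' hvc' :=
  (HgbN.mk_eq_mk_iff hvc hvc').mpr <|
    (hv.sub hv').exists_d_eq hf hg hfinj hfg hd' hdC hlift ⟨0, by rw [map_zero, sub_self]⟩

end IsConnecting

theorem exists_connectingHom {i : ℕ} (hlift : LiftsModBoundaries dC g i)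
    (hlift' : LiftsModBoundaries dC g (i + 1)) :
    ∃ δ : HgbN C dC (i + 1) →+ HgbN C'' d'' i, ∀ (x : C (i + 1)) (hx : IsCycN dC x)
      (v : C'' i) (hv : IsCycN d'' v), IsConnecting d' dC f g i x v →
        δ (HgbN.mk dC x hx) = HgbN.mk d'' v hv := by
  choose v hv using fun a : cycN C dC i => exists_isConnecting (f := f) hg hfg hdC hlift a.2
  have hvc a := (hv a).isCycN hf hfinj hd'
  let φ : cycN C dC i →+ HgbN C'' d'' i := AddMonoidHom.mk' (fun a => HgbN.mk d'' (v a) (hvc a))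
    fun a b => by
      rw [← HgbN.mk_add]
      exact (hv (a + b)).mk_eq hf hg hfinj hfg hd' hdC hlift' ((hv a).add (hv b)) _ _
  refine ⟨QuotientAddGroup.lift _ φ ?_, fun x hx v' hv'c hv' => ?_⟩
  · rintro a ha
    obtain ⟨q, hq⟩ := (hv a).exists_d_eq hf hg hfinj hfg hd' hdC hlift'
      (AddSubgroup.mem_addSubgroupOf.mp ha)
    exact (HgbN.mk_eq_zero_iff _).mpr ⟨q, hq⟩
  · exact (hv ⟨x, hx⟩).mk_eq hf hg hfinj hfg hd' hdC hlift' hv' _ _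

theorem range_indH_eq_ker_indH {i : ℕ} (hlift : LiftsModBoundaries dC g i) :
    (indH d'' d' f hf i).range = (indH d' dC g hg i).ker := by
  apply le_antisymm
  · rintro _ ⟨c, rfl⟩
    obtain ⟨v, hv, rfl⟩ := HgbN.mk_surjective c
    rw [AddMonoidHom.mem_ker, indH_mk, indH_mk, HgbN.mk_eq_zero_iff]
    exact ⟨0, ((hfg i).le ⟨v, rfl⟩ : g i (f i v) = 0) ▸ map_zero _⟩
  · intro c hc
    obtain ⟨x, hx, rfl⟩ := HgbN.mk_surjective c
    rw [AddMonoidHom.mem_ker, indH_mk, HgbN.mk_eq_zero_iff] at hc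
    obtain ⟨w, hw⟩ := hc
    obtain ⟨u, s, hu⟩ := hlift w ⟨x, hw.symm⟩
    obtain ⟨v, hv⟩ : x - d' i u ∈ (f i).range := by
      rw [hfg, AddMonoidHom.mem_ker, map_sub, hg, hu, map_sub, hdC, sub_zero, hw, sub_self]
    have hvc : IsCycN d'' v := IsCycN.of_map hf hfinj (hv ▸ hx.sub (isCycN_d hd' u))
    refine ⟨HgbN.mk d'' v hvc, ?_⟩
    rw [indH_mk, HgbN.mk_eq_mk_iff]
    exact ⟨-u, by rw [hv, map_neg]; abel⟩

section Connecting

variable {i : ℕ} {δ : HgbN C dC (i + 1) →+ HgbN C'' d'' i}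
  (hδ : ∀ (x : C (i + 1)) (hx : IsCycN dC x) (v : C'' i) (hv : IsCycN d'' v),
    IsConnecting d' dC f g i x v → δ (HgbN.mk dC x hx) = HgbN.mk d'' v hv)
include hδ

theorem range_indH_eq_ker_connecting (hlift : LiftsModBoundaries dC g i) :
    (indH d' dC g hg (i + 1)).range = δ.ker := by
  apply le_antisymm
  · rintro _ ⟨c, rfl⟩
    obtain ⟨u, hu, rfl⟩ := HgbN.mk_surjective c
    rw [AddMonoidHom.mem_ker, indH_mk, ← HgbN.mk_zero]
    exact hδ _ _ _ _ ⟨u, 0, by rw [map_zero, sub_zero], by rw [map_zero]; exact Eq.symm hu⟩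
  · intro c hc
    obtain ⟨x, hx, rfl⟩ := HgbN.mk_surjective c
    obtain ⟨v, hv⟩ := exists_isConnecting (f := f) hg hfg hdC hlift hx
    rw [AddMonoidHom.mem_ker, hδ x hx v (hv.isCycN hf hfinj hd') hv, HgbN.mk_eq_zero_iff] at hc
    obtain ⟨q, rfl⟩ := hc
    obtain ⟨u, w, hu, hfv⟩ := hv
    have huc : IsCycN d' (u - f (i + 1) q) := by
      change d' i (u - f (i + 1) q) = 0
      rw [map_sub, ← hf, hfv, sub_self]
    refine ⟨HgbN.mk d' _ huc, ?_⟩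
    rw [indH_mk, HgbN.mk_eq_mk_iff, map_sub, ((hfg _).le ⟨q, rfl⟩ : g _ (f _ q) = 0), hu]
    exact ⟨-w, by rw [map_neg]; abel⟩

theorem range_connecting_eq_ker_indH (hlift : LiftsModBoundaries dC g i) :
    δ.range = (indH d'' d' f hf i).ker := by
  apply le_antisymm
  · rintro _ ⟨c, rfl⟩
    obtain ⟨x, hx, rfl⟩ := HgbN.mk_surjective c
    obtain ⟨v, hv⟩ := exists_isConnecting (f := f) hg hfg hdC hlift hx
    rw [AddMonoidHom.mem_ker, hδ x hx v (hv.isCycN hf hfinj hd') hv, indH_mk,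
      HgbN.mk_eq_zero_iff]
    obtain ⟨u, -, -, hfv⟩ := hv
    exact ⟨u, hfv.symm⟩
  · intro c hc
    obtain ⟨v, hv, rfl⟩ := HgbN.mk_surjective c
    rw [AddMonoidHom.mem_ker, indH_mk, HgbN.mk_eq_zero_iff] at hc
    obtain ⟨u, hu⟩ := hc
    have hxc : IsCycN dC (g (i + 1) u) := by
      change dC i (g (i + 1) u) = 0
      rw [← hg, hu]
      exact (hfg i).le ⟨v, rfl⟩
    exact ⟨HgbN.mk dC _ hxc, hδ _ _ _ _ ⟨u, 0, by rw [map_zero, sub_zero], hu.symm⟩⟩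

end Connecting

end LongExactSequence

section Cokernel

variable {C' C K : ℕ → Type*} [∀ i, AddCommGroup (C' i)] [∀ i, AddCommGroup (C i)]
  [∀ i, AddCommGroup (K i)]
  {d' : ∀ i : ℕ, C' (i + 1) →+ C' i} {dC : ∀ i : ℕ, C (i + 1) →+ C i}
  {dK : ∀ i : ℕ, K (i + 1) →+ K i} {g : ∀ i, C' i →+ C i} {h : ∀ i, C i →+ K i}
  (hh : ∀ (i : ℕ) (x : C (i + 1)), h i (dC i x) = dK i (h (i + 1) x))
  (hgh : ∀ i, (g i).range = (h i).ker) (hhsurj : ∀ i, Function.Surjective (h i))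
include hh hgh hhsurj

theorem exists_map_eq_sub_d {m : ℕ} {x : C m} {k : K (m + 1)} (hk : dK m k = h m x) :
    ∃ u w, g m u = x - dC m w := by
  obtain ⟨w, rfl⟩ := hhsurj (m + 1) k
  obtain ⟨u, hu⟩ : x - dC m w ∈ (g m).range := by
    rw [hgh, AddMonoidHom.mem_ker, map_sub, hh, hk, sub_self]
  exact ⟨u, w, hu⟩

theorem liftsModBoundaries_of_subsingleton {m : ℕ} [Subsingleton (HgbN K dK (m + 1))] :
    LiftsModBoundaries dC g m := by
  rintro x ⟨y, hy⟩
  have hxc : IsCycN dK (h (m + 1) x) := by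
    change dK m (h (m + 1) x) = 0
    rw [← hh, ← hy]
    exact (hgh m).le ⟨y, rfl⟩
  obtain ⟨k, hk⟩ := HgbN.exists_eq_d_of_subsingleton hxc
  exact exists_map_eq_sub_d hh hgh hhsurj hk

theorem indH_zero_surjective (hg : ∀ (i : ℕ) (x : C' (i + 1)), g i (d' i x) = dC i (g (i + 1) x))
    [Subsingleton (HgbN K dK 0)] : Function.Surjective (indH d' dC g hg 0) := by
  intro c
  obtain ⟨x, hx, rfl⟩ := HgbN.mk_surjective c
  obtain ⟨k, hk⟩ := HgbN.exists_eq_d_of_subsingleton (isCycN_deg_zero (d := dK) (h 0 x))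
  obtain ⟨u, w, hu⟩ := exists_map_eq_sub_d hh hgh hhsurj hk
  refine ⟨HgbN.mk d' u (isCycN_deg_zero u), ?_⟩
  rw [indH_mk, HgbN.mk_eq_mk_iff]
  exact ⟨-w, by rw [hu, map_neg]; abel⟩

end Cokernel

theorem stmt15_general {C'' C' C K : ℕ → Type*} [∀ i, AddCommGroup (C'' i)]
    [∀ i, AddCommGroup (C' i)] [∀ i, AddCommGroup (C i)] [∀ i, AddCommGroup (K i)]
    (d'' : ∀ i : ℕ, C'' (i + 1) →+ C'' i) (d' : ∀ i : ℕ, C' (i + 1) →+ C' i)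
    (dC : ∀ i : ℕ, C (i + 1) →+ C i) (dK : ∀ i : ℕ, K (i + 1) →+ K i)
    (hd' : ∀ (i : ℕ) (x : C' (i + 1 + 1)), d' i (d' (i + 1) x) = 0)
    (hdC : ∀ (i : ℕ) (x : C (i + 1 + 1)), dC i (dC (i + 1) x) = 0)
    (f : ∀ i, C'' i →+ C' i)
    (hf : ∀ (i : ℕ) (x : C'' (i + 1)), f i (d'' i x) = d' i (f (i + 1) x))
    (g : ∀ i, C' i →+ C i)
    (hg : ∀ (i : ℕ) (x : C' (i + 1)), g i (d' i x) = dC i (g (i + 1) x))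
    (h : ∀ i, C i →+ K i)
    (hh : ∀ (i : ℕ) (x : C (i + 1)), h i (dC i x) = dK i (h (i + 1) x))
    (hfinj : ∀ i, Function.Injective (f i))
    (hfg : ∀ i, (f i).range = (g i).ker)
    (hgh : ∀ i, (g i).range = (h i).ker)
    (hhsurj : ∀ i, Function.Surjective (h i))
    (n : ℕ) (hK : ∀ i ≤ n + 1, Subsingleton (HgbN K dK i)) :
    ∃ δ : ∀ i : ℕ, HgbN C dC (i + 1) →+ HgbN C'' d'' i,
      (∀ i ≤ n, (indH d'' d' f hf i).range = (indH d' dC g hg i).ker) ∧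
      (∀ i : ℕ, i + 1 ≤ n → (indH d' dC g hg (i + 1)).range = (δ i).ker) ∧
      (∀ i : ℕ, i + 1 ≤ n → (δ i).range = (indH d'' d' f hf i).ker) ∧
      Function.Surjective (indH d' dC g hg 0) := by
  have hlift (m : ℕ) (hm : m ≤ n) : LiftsModBoundaries dC g m :=
    have := hK (m + 1) (by omega)
    liftsModBoundaries_of_subsingleton hh hgh hhsurj
  choose δ hδ using fun i (hi : i + 1 ≤ n) =>
    exists_connectingHom hf hg hfinj hfg hd' hdC (hlift i (by omega)) (hlift (i + 1) hi)
  have := hK 0 (by omega)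
  refine ⟨fun i => if hi : i + 1 ≤ n then δ i hi else 0,
    fun i hi => range_indH_eq_ker_indH hf hg hfinj hfg hd' hdC (hlift i hi),
    fun i hi => ?_, fun i hi => ?_, indH_zero_surjective hh hgh hhsurj hg⟩
  · simp only [dif_pos hi]
    exact range_indH_eq_ker_connecting hf hg hfinj hfg hd' hdC (hδ i hi) (hlift i (by omega))
  · simp only [dif_pos hi]
    exact range_connecting_eq_ker_indH hf hg hfinj hfg hd' hdC (hδ i hi) (hlift i (by omega))

/-- Let `0 → C'' → C' → C → K → 0` be an exact sequence of chain complexes of abelian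
groups concentrated in non-negative degrees, with `H_i(K) = 0` for all `i ≤ n + 1`.
Then there are connecting homomorphisms giving an exact homology sequence
`H_n(C'') → H_n(C') → H_n(C) → H_{n−1}(C'') → ⋯ → H_0(C'') → H_0(C') → H_0(C) → 0`. -/
theorem stmt15 {C'' C' C K : ℕ → Type*} [∀ i, AddCommGroup (C'' i)]
    [∀ i, AddCommGroup (C' i)] [∀ i, AddCommGroup (C i)] [∀ i, AddCommGroup (K i)]
    (d'' : ∀ i : ℕ, C'' (i + 1) →+ C'' i) (d' : ∀ i : ℕ, C' (i + 1) →+ C' i)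
    (dC : ∀ i : ℕ, C (i + 1) →+ C i) (dK : ∀ i : ℕ, K (i + 1) →+ K i)
    (hd'' : ∀ (i : ℕ) (x : C'' (i + 1 + 1)), d'' i (d'' (i + 1) x) = 0)
    (hd' : ∀ (i : ℕ) (x : C' (i + 1 + 1)), d' i (d' (i + 1) x) = 0)
    (hdC : ∀ (i : ℕ) (x : C (i + 1 + 1)), dC i (dC (i + 1) x) = 0)
    (hdK : ∀ (i : ℕ) (x : K (i + 1 + 1)), dK i (dK (i + 1) x) = 0)
    (f : ∀ i, C'' i →+ C' i)
    (hf : ∀ (i : ℕ) (x : C'' (i + 1)), f i (d'' i x) = d' i (f (i + 1) x))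
    (g : ∀ i, C' i →+ C i)
    (hg : ∀ (i : ℕ) (x : C' (i + 1)), g i (d' i x) = dC i (g (i + 1) x))
    (h : ∀ i, C i →+ K i)
    (hh : ∀ (i : ℕ) (x : C (i + 1)), h i (dC i x) = dK i (h (i + 1) x))
    (hfinj : ∀ i, Function.Injective (f i))
    (hfg : ∀ i, (f i).range = (g i).ker)
    (hgh : ∀ i, (g i).range = (h i).ker)
    (hhsurj : ∀ i, Function.Surjective (h i))
    (n : ℕ) (hK : ∀ i ≤ n + 1, Subsingleton (HgbN K dK i)) :
    ∃ δ : ∀ i : ℕ, HgbN C dC (i + 1) →+ HgbN C'' d'' i,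
      (∀ i ≤ n, (indH d'' d' f hf i).range = (indH d' dC g hg i).ker) ∧
      (∀ i : ℕ, i + 1 ≤ n → (indH d' dC g hg (i + 1)).range = (δ i).ker) ∧
      (∀ i : ℕ, i + 1 ≤ n → (δ i).range = (indH d'' d' f hf i).ker) ∧
      Function.Surjective (indH d' dC g hg 0) :=
  stmt15_general d'' d' dC dK hd' hdC f hf g hg h hh hfinj hfg hgh hhsurj n hK
end
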